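/- arXiv:2507.16675 — 2 statements merged into one kernel-verified Lean document; each statement's English description precedes it below -/
import Mathlib

section
/- Let f : ℝ^n → ℝ be convex and differentiable with 1-Lipschitz gradient, let x₀ ∈ ℝ^n and let x_* be a global minimizer of f with x₀ ≠ x_*. Define f̂ : (ℝ^n)^p → ℝ by f̂(x^{(1)},…,x^{(p)}) = f(x^{(1)} + … + x^{(p)}), and let x̂₀ and x̂_* have all p blocks equal to x₀/p and x_*/p respectively. Let (x̂_i)_{i=0,…,pK} be the cyclic coordinate descent iterates on f̂ with step sizes γ_1,…,γ_p > 0 starting from x̂₀, and set s_i = Σ_{ℓ=1}^p x̂_i^{(ℓ)}. Then: (a) x̂_* is a global minimizer of f̂; (b) s_0 = x₀ and at every step i with active block ℓ, s_i = s_{i−1} − γ_ℓ ∇f(s_{i−1}), i.e., (s_i) are gradient descent iterates on f with cyclically repeating step sizes; (c) f̂(x̂_i) = f(s_i) for all i; (d) ‖x̂₀ − x̂_*‖²_{(1,…,1)} = (1/p)‖x₀ − x_*‖²; and consequently (e) (f̂(x̂_{pK}) − f̂(x̂_*))/‖x̂₀ − x̂_*‖²_{(1,…,1)} = p · (f(s_{pK})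 − f(x_*))/‖x₀ − x_*‖². In particular, the worst-case of p-block cyclic coordinate descent over F^coord_{0,(1,…,1)} after K cycles is at least p times the worst-case of gradient descent over 1-smooth convex functions after pK steps. -/
open RealInnerProductSpace

noncomputable section

/-- The `ℓ`-th block `ℝ^{d_ℓ}` of the decomposition `ℝ^d = ℝ^{d_1} × … × ℝ^{d_p}`. -/
abbrev Blk {p : ℕ} (d : Fin p → ℕ) (ℓ : Fin p) : Type := EuclideanSpace ℝ (Fin (d ℓ))

/-- The space `ℝ^d = ℝ^{d_1} × … × ℝ^{d_p}` with the Euclidean (ℓ²) norm. -/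
abbrev Sp {p : ℕ} (d : Fin p → ℕ) : Type := PiLp 2 (Blk d)

/-- The selection embedding `U_ℓ : ℝ^{d_ℓ} → ℝ^d` placing `h` in block `ℓ` and `0` elsewhere. -/
def inj {p : ℕ} (d : Fin p → ℕ) (ℓ : Fin p) (h : Blk d ℓ) : Sp d :=
  (WithLp.equiv 2 (∀ ℓ, Blk d ℓ)).symm (Pi.single ℓ h)

/-- Membership in the class `F^coord_{0,L}(ℝ^d)`: convex, differentiable, and for each block
`ℓ` the partial gradient `∇^{(ℓ)} f` is `L_ℓ`-Lipschitz along the block `ℓ`. -/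
def IsCoordSmooth {p : ℕ} (d : Fin p → ℕ) (L : Fin p → ℝ) (f : Sp d → ℝ) : Prop :=
  ConvexOn ℝ Set.univ f ∧ Differentiable ℝ f ∧
    ∀ (ℓ : Fin p) (x : Sp d) (h : Blk d ℓ),
      ‖gradient f (x + inj d ℓ h) ℓ - gradient f x ℓ‖ ≤ L ℓ * ‖h‖

/-- Block index used at step `i` (steps counted from `0`), cycling through the `p` blocks. -/
def blkIdx (p : ℕ) (hp : 0 < p) (i : ℕ) : Fin p := ⟨i % p, Nat.mod_lt i hp⟩

/-- `x` is a sequence of cyclic coordinate descent iterates on `f`, with step size `s ℓ`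
used for the block `ℓ`, blocks being selected in cyclic order. -/
def IsCCD {p : ℕ} (hp : 0 < p) (d : Fin p → ℕ) (s : Fin p → ℝ)
    (f : Sp d → ℝ) (x : ℕ → Sp d) : Prop :=
  ∀ i : ℕ, x (i + 1) = x i - s (blkIdx p hp i) •
    inj d (blkIdx p hp i) (gradient f (x i) (blkIdx p hp i))

/-- Worst case of `K` cycles of cyclic coordinate descent with per-block step sizes `s` over the
class `F^coord_{0,L}(ℝ^d)`, performance measured by `(f(x_{pK}) - f_*)/‖x₀ - x_*‖²_L`. -/
def WCCD {p : ℕ} (hp : 0 < p) (d : Fin p → ℕ) (s : Fin p → ℝ) (L : Fin p → ℝ) (K : ℕ) : ℝ :=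
  sSup {r : ℝ | ∃ (f : Sp d → ℝ) (x : ℕ → Sp d) (xs : Sp d),
    IsCoordSmooth d L f ∧ IsMinOn f Set.univ xs ∧ IsCCD hp d s f x ∧ x 0 ≠ xs ∧
    r = (f (x (p * K)) - f xs) / ∑ ℓ, L ℓ * ‖x 0 ℓ - xs ℓ‖ ^ 2}

/-- Worst case of `N` steps of gradient descent with cyclically repeating step sizes `γ` over
`1`-smooth convex functions, performance measured by `(g(u_N) - g_*)/‖u₀ - u_*‖²`. -/
def WGD (n : ℕ) {p : ℕ} (hp : 0 < p) (γ : Fin p → ℝ) (N : ℕ) : ℝ :=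
  sSup {r : ℝ | ∃ (g : EuclideanSpace ℝ (Fin n) → ℝ) (u : ℕ → EuclideanSpace ℝ (Fin n))
      (us : EuclideanSpace ℝ (Fin n)),
    ConvexOn ℝ Set.univ g ∧ Differentiable ℝ g ∧
    (∀ a b : EuclideanSpace ℝ (Fin n), ‖gradient g a - gradient g b‖ ≤ ‖a - b‖) ∧
    IsMinOn g Set.univ us ∧
    (∀ i : ℕ, u (i + 1) = u i - γ (blkIdx p hp i) • gradient g (u i)) ∧ u 0 ≠ us ∧
    r = (g (u N) - g us) / ‖u 0 - us‖ ^ 2}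


/-- The sum of the `p` blocks of a point of `(ℝ^n)^p`. -/
def blockSum (p : ℕ) {n : ℕ} (x : Sp (fun _ : Fin p => n)) : EuclideanSpace ℝ (Fin n) :=
  ∑ ℓ : Fin p, x ℓ

/-- The function `f̂(x^{(1)},…,x^{(p)}) = f(x^{(1)} + … + x^{(p)})`. -/
def fhat (p : ℕ) {n : ℕ} (f : EuclideanSpace ℝ (Fin n) → ℝ) :
    Sp (fun _ : Fin p => n) → ℝ :=
  fun x => f (∑ ℓ : Fin p, x ℓ)

/-- The point of `(ℝ^n)^p` whose `p` blocks all equal `v/p`. -/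
def diagPt (p : ℕ) {n : ℕ} (v : EuclideanSpace ℝ (Fin n)) : Sp (fun _ : Fin p => n) :=
  (WithLp.equiv 2 (∀ _ : Fin p, EuclideanSpace ℝ (Fin n))).symm fun _ => (p : ℝ)⁻¹ • v

/-!
`f̂` depends on `x` only through the block sum `s(x) = x^{(1)} + … + x^{(p)}`, so every partial
gradient of `f̂` equals `∇f(s(x))`. A block step of size `γ_ℓ` therefore moves `s(x)` by
`-γ_ℓ ∇f(s(x))`: the block sums run gradient descent on `f`, while `f̂` inherits convexity and
unit block smoothness from `f`. Spreading `x₀` and `x_*` evenly over the blocks divides the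
squared initial distance by `p`, which multiplies the performance ratio by `p`.

For the comparison of worst cases the supremum defining the CCD worst case has to be a genuine
one (`sSup` of an unbounded set of reals is `0`): the block descent lemma and
`‖∇^{(ℓ)} f‖² ≤ 2 L_ℓ (f - f_*)` bound the gap growth per step, which bounds the ratio.
-/

open Set

section Calculus

variable {F : Type*} [NormedAddCommGroup F] [InnerProductSpace ℝ F] [CompleteSpace F]
  {f : F → ℝ}

lemma hasDerivAt_comp_add_smul {x v : F} {t : ℝ} (hf : DifferentiableAt ℝ f (x + t • v)) :
    HasDerivAt (fun s : ℝ => f (x + s • v)) ⟪gradient f (x + t • v), v⟫ t := by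
  have hline : HasDerivAt (fun s : ℝ => x + s • v) v t := by
    simpa using ((hasDerivAt_id t).smul_const v).const_add x
  simpa [InnerProductSpace.toDual_apply_apply, Function.comp_def] using
    hf.hasGradientAt.hasFDerivAt.comp_hasDerivAt t hline

lemma ConvexOn.add_inner_gradient_le (hc : ConvexOn ℝ univ f) {x : F}
    (hf : DifferentiableAt ℝ f x) (y : F) : f x + ⟪gradient f x, y - x⟫ ≤ f y := by
  have hφ : ConvexOn ℝ univ fun t : ℝ => f (x + t • (y - x)) := by
    simpa [Function.comp_def, AffineMap.lineMap_apply, add_comm] using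
      hc.comp_affineMap (AffineMap.lineMap x y)
  have hd : HasDerivAt (fun t : ℝ => f (x + t • (y - x))) ⟪gradient f x, y - x⟫ 0 := by
    simpa using hasDerivAt_comp_add_smul (t := 0) (v := y - x) (by simpa using hf)
  have := hφ.le_slope_of_hasDerivAt (mem_univ 0) (mem_univ 1) one_pos hd
  simp only [slope_def_field, zero_smul, add_zero, one_smul, add_sub_cancel, sub_zero,
    div_one] at this
  linarith

end Calculus

/-- Integrating the bound on `φ'` gives the quadratic upper bound of the descent lemma. -/
lemma image_one_le_of_deriv_sub_le {φ φ' : ℝ → ℝ} (hd : ∀ t, HasDerivAt φ (φ' t) t) {c : ℝ}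
    (hφ' : ∀ t ∈ Icc (0 : ℝ) 1, φ' t - φ' 0 ≤ c * t) :
    φ 1 ≤ φ 0 + φ' 0 + c / 2 := by
  set ψ : ℝ → ℝ := fun t => φ t - t * φ' 0 - c / 2 * t ^ 2
  have hψ : ∀ t, HasDerivAt ψ (φ' t - φ' 0 - c * t) t := by
    intro t
    have h2 : HasDerivAt (fun t : ℝ => c / 2 * t ^ 2) (c * t) t :=
      ((hasDerivAt_pow 2 t).const_mul (c / 2)).congr_deriv (by push_cast; ring)
    exact ((hd t).sub ((hasDerivAt_id t).mul_const (φ' 0))).sub h2 |>.congr_deriv (by simp)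
  have hanti : AntitoneOn ψ (Icc 0 1) := by
    refine antitoneOn_of_hasDerivWithinAt_nonpos (convex_Icc 0 1)
      (fun t _ => (hψ t).continuousAt.continuousWithinAt) (fun t _ => (hψ t).hasDerivWithinAt)
      fun t ht => ?_
    rw [interior_Icc] at ht
    linarith [hφ' t (Ioo_subset_Icc_self ht)]
  have := hanti (left_mem_Icc.2 zero_le_one) (right_mem_Icc.2 zero_le_one) zero_le_one
  simp only [ψ] at this
  linarith

section Blocks

variable {p : ℕ} {d : Fin p → ℕ}

lemma inj_apply (ℓ : Fin p) (h : Blk d ℓ) (m : Fin p) : inj d ℓ h m = Pi.single ℓ h m := rfl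

lemma inj_smul (ℓ : Fin p) (c : ℝ) (h : Blk d ℓ) : inj d ℓ (c • h) = c • inj d ℓ h := by
  ext m : 1
  simp [inj_apply, Pi.single_smul]

lemma inner_inj (g : Sp d) (ℓ : Fin p) (h : Blk d ℓ) : ⟪g, inj d ℓ h⟫ = ⟪g ℓ, h⟫ := by
  rw [PiLp.inner_apply, Finset.sum_eq_single ℓ]
  · simp [inj_apply]
  · intro m _ hm
    simp [inj_apply, Pi.single_eq_of_ne hm]
  · simp

variable {f : Sp d → ℝ} {ℓ : Fin p} {c : ℝ}

/-- The descent lemma along block `ℓ`. -/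
lemma apply_add_inj_le (hf : Differentiable ℝ f)
    (hL : ∀ (x : Sp d) (h : Blk d ℓ), ‖gradient f (x + inj d ℓ h) ℓ - gradient f x ℓ‖ ≤ c * ‖h‖)
    (x : Sp d) (h : Blk d ℓ) :
    f (x + inj d ℓ h) ≤ f x + ⟪gradient f x ℓ, h⟫ + c / 2 * ‖h‖ ^ 2 := by
  have hd (t : ℝ) := hasDerivAt_comp_add_smul (x := x) (v := inj d ℓ h) (hf (x + t • inj d ℓ h))
  have hφ' : ∀ t ∈ Icc (0 : ℝ) 1, ⟪gradient f (x + t • inj d ℓ h), inj d ℓ h⟫ -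
      ⟪gradient f (x + (0 : ℝ) • inj d ℓ h), inj d ℓ h⟫ ≤ c * ‖h‖ ^ 2 * t := by
    intro t ht
    rw [zero_smul, add_zero, inner_inj, inner_inj, ← inner_sub_left, ← inj_smul]
    calc _ ≤ ‖gradient f (x + inj d ℓ (t • h)) ℓ - gradient f x ℓ‖ * ‖h‖ :=
          real_inner_le_norm _ _
      _ ≤ c * ‖t • h‖ * ‖h‖ := by gcongr; exact hL x (t • h)
      _ = c * ‖h‖ ^ 2 * t := by rw [norm_smul, Real.norm_of_nonneg ht.1]; ring
  have := image_one_le_of_deriv_sub_le hd hφ'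
  simp only [zero_smul, add_zero, one_smul, inner_inj] at this
  linarith

lemma sq_norm_gradient_apply_le (hf : Differentiable ℝ f)
    (hL : ∀ (x : Sp d) (h : Blk d ℓ), ‖gradient f (x + inj d ℓ h) ℓ - gradient f x ℓ‖ ≤ c * ‖h‖)
    (hc : 0 < c) {xs : Sp d} (hmin : IsMinOn f univ xs) (x : Sp d) :
    ‖gradient f x ℓ‖ ^ 2 ≤ 2 * c * (f x - f xs) := by
  have hstep := apply_add_inj_le hf hL x (-c⁻¹ • gradient f x ℓ)
  rw [inner_smul_right, real_inner_self_eq_norm_sq, norm_smul, Real.norm_eq_abs, abs_neg,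
    abs_of_pos (inv_pos.2 hc), mul_pow, ← mul_assoc, mul_comm (c / 2),
    show c⁻¹ ^ 2 * (c / 2) = c⁻¹ / 2 by field_simp] at hstep
  have hxs := isMinOn_univ_iff.1 hmin (x + inj d ℓ (-c⁻¹ • gradient f x ℓ))
  have : c⁻¹ * ‖gradient f x ℓ‖ ^ 2 ≤ 2 * (f x - f xs) := by linarith
  calc ‖gradient f x ℓ‖ ^ 2 = c * (c⁻¹ * ‖gradient f x ℓ‖ ^ 2) := by field_simp
    _ ≤ 2 * c * (f x - f xs) := by nlinarith

lemma apply_sub_smul_inj_gradient_sub_le (hf : Differentiable ℝ f)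
    (hL : ∀ (x : Sp d) (h : Blk d ℓ), ‖gradient f (x + inj d ℓ h) ℓ - gradient f x ℓ‖ ≤ c * ‖h‖)
    (hc : 0 < c) {xs : Sp d} (hmin : IsMinOn f univ xs) (γ : ℝ) (x : Sp d) :
    f (x - γ • inj d ℓ (gradient f x ℓ)) - f xs ≤ 2 * (1 + (c * γ) ^ 2) * (f x - f xs) := by
  set G := ‖gradient f x ℓ‖ ^ 2
  have hG := sq_norm_gradient_apply_le hf hL hc hmin x
  have hstep := apply_add_inj_le hf hL x (-γ • gradient f x ℓ)
  rw [inj_smul, neg_smul, ← sub_eq_add_neg, inner_smul_right, real_inner_self_eq_norm_sq,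
    norm_smul, Real.norm_eq_abs, abs_neg, mul_pow, sq_abs] at hstep
  -- `2 c (-γ) G ≤ (1 + (cγ)²) G` is `(1 + cγ)² G ≥ 0`
  have hlin : c * (-γ * G) ≤ c * ((1 + (c * γ) ^ 2) * (f x - f xs)) := by
    have : 2 * c * (-γ * G) ≤ (1 + (c * γ) ^ 2) * G := by
      nlinarith [mul_nonneg (sq_nonneg (1 + c * γ)) (sq_nonneg ‖gradient f x ℓ‖)]
    nlinarith [mul_le_mul_of_nonneg_left hG (by positivity : (0 : ℝ) ≤ 1 + (c * γ) ^ 2)]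
  have hquad : c / 2 * (γ ^ 2 * G) ≤ (c * γ) ^ 2 * (f x - f xs) := by
    nlinarith [mul_le_mul_of_nonneg_left hG (by positivity : (0 : ℝ) ≤ γ ^ 2)]
  have := le_of_mul_le_mul_left hlin hc
  nlinarith

end Blocks

section Bound

variable {p : ℕ} {d : Fin p → ℕ} {f : Sp d → ℝ} {L : Fin p → ℝ} {xs : Sp d}

/-- Convexity bounds the gap by `∑ ⟪∇^{(ℓ)} f(x), x^{(ℓ)} - x_*^{(ℓ)}⟫`; Young's inequality and
`‖∇^{(ℓ)} f(x)‖² ≤ 2 L_ℓ (f(x) - f_*)` turn each term into half the gap over `p` plus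
`p L_ℓ ‖x^{(ℓ)} - x_*^{(ℓ)}‖²`. -/
lemma IsCoordSmooth.sub_le_of_isMinOn (hsm : IsCoordSmooth d L f) (hL : ∀ ℓ, 0 < L ℓ)
    (hp : 0 < p) (hmin : IsMinOn f univ xs) (x : Sp d) :
    f x - f xs ≤ 2 * p * ∑ ℓ, L ℓ * ‖x ℓ - xs ℓ‖ ^ 2 := by
  obtain ⟨hc, hf, hlip⟩ := hsm
  set Δ := f x - f xs
  have hpR : (0 : ℝ) < p := by exact_mod_cast hp
  have hterm (ℓ : Fin p) :
      ⟪gradient f x ℓ, x ℓ - xs ℓ⟫ ≤ Δ / (2 * p) + p * (L ℓ * ‖x ℓ - xs ℓ‖ ^ 2) := by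
    have hG := sq_norm_gradient_apply_le hf (hlip ℓ) (hL ℓ) hmin x
    set a := ‖gradient f x ℓ‖
    set b := ‖x ℓ - xs ℓ‖
    have hab : 4 * p * L ℓ * (a * b) ≤ 2 * L ℓ * Δ + 4 * p * L ℓ * (p * (L ℓ * b ^ 2)) := by
      nlinarith [sq_nonneg (a - 2 * p * L ℓ * b)]
    have : a * b ≤ Δ / (2 * p) + p * (L ℓ * b ^ 2) := by
      have h4 : 0 < 4 * p * L ℓ := by have := hL ℓ; positivity
      refine le_of_mul_le_mul_left ?_ h4
      calc 4 * p * L ℓ * (a * b) ≤ 2 * L ℓ * Δ + 4 * p * L ℓ * (p * (L ℓ * b ^ 2)) := hab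
        _ = 4 * p * L ℓ * (Δ / (2 * p) + p * (L ℓ * b ^ 2)) := by field_simp; ring
    exact (real_inner_le_norm _ _).trans this
  have hgap : Δ ≤ ∑ ℓ, ⟪gradient f x ℓ, x ℓ - xs ℓ⟫ := by
    have := hc.add_inner_gradient_le (hf x) xs
    rw [← neg_sub x xs, inner_neg_right, PiLp.inner_apply] at this
    simp only [PiLp.sub_apply] at this
    linarith
  have hsum := hgap.trans (Finset.sum_le_sum fun ℓ _ => hterm ℓ)
  rw [Finset.sum_add_distrib, Finset.sum_const, Finset.card_univ, Fintype.card_fin,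
    nsmul_eq_mul, ← Finset.mul_sum] at hsum
  have : (p : ℝ) * (Δ / (2 * p)) = Δ / 2 := by field_simp
  linarith

variable (hp : 0 < p)

def ccdGapFactor (L γ : Fin p → ℝ) (j : ℕ) : ℝ :=
  2 * (1 + (L (blkIdx p hp j) * γ (blkIdx p hp j)) ^ 2)

lemma IsCCD.sub_le_prod_mul {γ : Fin p → ℝ} {x : ℕ → Sp d} (hccd : IsCCD hp d γ f x)
    (hf : Differentiable ℝ f)
    (hlip : ∀ ℓ (y : Sp d) (h : Blk d ℓ), ‖gradient f (y + inj d ℓ h) ℓ - gradient f y ℓ‖ ≤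
      L ℓ * ‖h‖)
    (hL : ∀ ℓ, 0 < L ℓ) (hmin : IsMinOn f univ xs) (N : ℕ) :
    f (x N) - f xs ≤ (∏ j ∈ Finset.range N, ccdGapFactor hp L γ j) * (f (x 0) - f xs) := by
  induction N with
  | zero => simp
  | succ N ih =>
    rw [Finset.prod_range_succ, mul_comm _ (ccdGapFactor hp L γ N), mul_assoc, hccd N]
    exact (apply_sub_smul_inj_gradient_sub_le hf (hlip _) (hL _) hmin _ (x N)).trans
      (mul_le_mul_of_nonneg_left ih (by positivity))

lemma IsCCD.div_le_prod {γ : Fin p → ℝ} {x : ℕ → Sp d} (hccd : IsCCD hp d γ f x)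
    (hsm : IsCoordSmooth d L f) (hL : ∀ ℓ, 0 < L ℓ) (hmin : IsMinOn f univ xs) (N : ℕ) :
    (f (x N) - f xs) / ∑ ℓ, L ℓ * ‖x 0 ℓ - xs ℓ‖ ^ 2 ≤
      2 * p * ∏ j ∈ Finset.range N, ccdGapFactor hp L γ j := by
  have hfac : 0 ≤ ∏ j ∈ Finset.range N, ccdGapFactor hp L γ j :=
    Finset.prod_nonneg fun j _ => by unfold ccdGapFactor; positivity
  refine div_le_of_le_mul₀ (Finset.sum_nonneg fun ℓ _ => by have := hL ℓ; positivity)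
    (by positivity) ?_
  calc f (x N) - f xs ≤ (∏ j ∈ Finset.range N, ccdGapFactor hp L γ j) * (f (x 0) - f xs) :=
        hccd.sub_le_prod_mul hp hsm.2.1 hsm.2.2 hL hmin N
    _ ≤ (∏ j ∈ Finset.range N, ccdGapFactor hp L γ j) *
          (2 * p * ∑ ℓ, L ℓ * ‖x 0 ℓ - xs ℓ‖ ^ 2) :=
        mul_le_mul_of_nonneg_left (hsm.sub_le_of_isMinOn hL hp hmin (x 0)) hfac
    _ = _ := by ring

end Bound

section Lifting

variable {p n : ℕ} {f : EuclideanSpace ℝ (Fin n) → ℝ}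

def blockSumCLM (p n : ℕ) : Sp (fun _ : Fin p => n) →L[ℝ] EuclideanSpace ℝ (Fin n) :=
  ∑ ℓ, PiLp.proj 2 (fun _ : Fin p => EuclideanSpace ℝ (Fin n)) ℓ

lemma blockSumCLM_apply (x : Sp (fun _ : Fin p => n)) : blockSumCLM p n x = blockSum p x := by
  simp [blockSumCLM, blockSum]

lemma fhat_apply (x : Sp (fun _ : Fin p => n)) : fhat p f x = f (blockSum p x) := rfl

lemma fhat_eq_comp : fhat p f = f ∘ blockSumCLM p n :=
  funext fun x => congrArg f (blockSumCLM_apply x).symm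

lemma blockSum_inj (ℓ : Fin p) (h : EuclideanSpace ℝ (Fin n)) :
    blockSum p (inj (fun _ : Fin p => n) ℓ h) = h := by
  simp [blockSum, inj_apply]

lemma blockSum_diagPt (hp : 0 < p) (v : EuclideanSpace ℝ (Fin n)) :
    blockSum p (diagPt p v) = v := by
  have hpR : (p : ℝ) ≠ 0 := by exact_mod_cast hp.ne'
  simp only [blockSum, diagPt, WithLp.equiv_symm_apply, PiLp.toLp_apply, Finset.sum_const,
    Finset.card_univ, Fintype.card_fin]
  rw [← Nat.cast_smul_eq_nsmul ℝ, smul_smul, mul_inv_cancel₀ hpR, one_smul]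

lemma fhat_diagPt (hp : 0 < p) (v : EuclideanSpace ℝ (Fin n)) : fhat p f (diagPt p v) = f v :=
  congrArg f (blockSum_diagPt hp v)

lemma isMinOn_fhat_diagPt (hp : 0 < p) {xs : EuclideanSpace ℝ (Fin n)}
    (hmin : IsMinOn f univ xs) : IsMinOn (fhat p f) univ (diagPt p xs) :=
  isMinOn_univ_iff.2 fun y =>
    (fhat_diagPt hp xs).trans_le (isMinOn_univ_iff.1 hmin (blockSum p y))

lemma sum_sq_norm_diagPt_sub (v w : EuclideanSpace ℝ (Fin n)) :
    ∑ ℓ : Fin p, ‖diagPt p v ℓ - diagPt p w ℓ‖ ^ 2 = (p : ℝ)⁻¹ * ‖v - w‖ ^ 2 := by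
  have hterm (ℓ : Fin p) : ‖diagPt p v ℓ - diagPt p w ℓ‖ ^ 2 = ((p : ℝ)⁻¹ * ‖v - w‖) ^ 2 := by
    simp [diagPt, ← smul_sub, norm_smul]
  rw [Finset.sum_congr rfl fun ℓ _ => hterm ℓ, Fin.sum_const, nsmul_eq_mul]
  rcases p.eq_zero_or_pos with rfl | hp
  · simp
  · field_simp

lemma hasGradientAt_fhat (hf : Differentiable ℝ f) (x : Sp (fun _ : Fin p => n)) :
    HasGradientAt (fhat p f)
      ((WithLp.equiv 2 _).symm fun _ : Fin p => gradient f (blockSum p x)) x := by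
  rw [hasGradientAt_iff_hasFDerivAt, fhat_eq_comp]
  refine ((hf _).hasGradientAt.hasFDerivAt.comp x (blockSumCLM p n).hasFDerivAt).congr_fderiv ?_
  ext v
  simp [PiLp.inner_apply, blockSumCLM_apply, blockSum]

lemma gradient_fhat_apply (hf : Differentiable ℝ f) (x : Sp (fun _ : Fin p => n)) (ℓ : Fin p) :
    gradient (fhat p f) x ℓ = gradient f (blockSum p x) := by
  rw [(hasGradientAt_fhat hf x).gradient]
  rfl

lemma isCoordSmooth_fhat (hc : ConvexOn ℝ univ f) (hf : Differentiable ℝ f)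
    (hlip : ∀ a b, ‖gradient f a - gradient f b‖ ≤ ‖a - b‖) :
    IsCoordSmooth (fun _ : Fin p => n) (fun _ => 1) (fhat p f) := by
  refine ⟨?_, fun x => (hasGradientAt_fhat hf x).differentiableAt, fun ℓ x h => ?_⟩
  · rw [fhat_eq_comp]
    have h := hc.comp_linearMap (blockSumCLM p n).toLinearMap
    rw [preimage_univ] at h
    exact h
  · have hsum : blockSum p (x + inj _ ℓ h) = blockSum p x + h := by
      rw [← blockSumCLM_apply, map_add, blockSumCLM_apply, blockSumCLM_apply, blockSum_inj]
    rw [gradient_fhat_apply hf, gradient_fhat_apply hf, hsum, one_mul]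
    simpa using hlip (blockSum p x + h) (blockSum p x)

lemma IsCCD.blockSum_succ (hp : 0 < p) {γ : Fin p → ℝ} {xh : ℕ → Sp (fun _ : Fin p => n)}
    (hiter : IsCCD hp (fun _ : Fin p => n) γ (fhat p f) xh) (hf : Differentiable ℝ f) (i : ℕ) :
    blockSum p (xh (i + 1)) =
      blockSum p (xh i) - γ (blkIdx p hp i) • gradient f (blockSum p (xh i)) := by
  rw [hiter i, ← blockSumCLM_apply, map_sub, map_smul, blockSumCLM_apply, blockSumCLM_apply,
    blockSum_inj, gradient_fhat_apply hf]

end Lifting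

section WorstCase

variable {n p : ℕ} (hp : 0 < p)

def gdSeq (γ : Fin p → ℝ) (g : EuclideanSpace ℝ (Fin n) → ℝ) (u₀ : EuclideanSpace ℝ (Fin n)) :
    ℕ → EuclideanSpace ℝ (Fin n)
  | 0 => u₀
  | i + 1 => gdSeq γ g u₀ i - γ (blkIdx p hp i) • gradient g (gdSeq γ g u₀ i)

def ccdSeq {d : Fin p → ℕ} (γ : Fin p → ℝ) (f : Sp d → ℝ) (x₀ : Sp d) : ℕ → Sp d
  | 0 => x₀
  | i + 1 => ccdSeq γ f x₀ i - γ (blkIdx p hp i) •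
      inj d (blkIdx p hp i) (gradient f (ccdSeq γ f x₀ i) (blkIdx p hp i))

lemma isCCD_ccdSeq {d : Fin p → ℕ} (γ : Fin p → ℝ) (f : Sp d → ℝ) (x₀ : Sp d) :
    IsCCD hp d γ f (ccdSeq hp γ f x₀) :=
  fun _ => rfl

variable {f : EuclideanSpace ℝ (Fin n) → ℝ} {γ : Fin p → ℝ}

lemma IsCCD.blockSum_eq {xh : ℕ → Sp (fun _ : Fin p => n)}
    (hiter : IsCCD hp (fun _ : Fin p => n) γ (fhat p f) xh) (hf : Differentiable ℝ f)
    {u : ℕ → EuclideanSpace ℝ (Fin n)}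
    (hu : ∀ i, u (i + 1) = u i - γ (blkIdx p hp i) • gradient f (u i))
    (h0 : blockSum p (xh 0) = u 0) (i : ℕ) : blockSum p (xh i) = u i := by
  induction i with
  | zero => exact h0
  | succ i ih => rw [hiter.blockSum_succ hp hf, ih, hu]

lemma div_inv_mul_eq_mul_div {K : Type*} [Field K] (a b c : K) :
    a / (c⁻¹ * b) = c * (a / b) := by
  rw [div_mul_eq_div_div, div_inv_eq_mul]; ring

lemma mul_WGD_le_WCCD (K : ℕ) (hconv : ConvexOn ℝ univ f) (hdiff : Differentiable ℝ f)
    (hlip : ∀ a b, ‖gradient f a - gradient f b‖ ≤ ‖a - b‖) {x₀ xs : EuclideanSpace ℝ (Fin n)}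
    (hmin : IsMinOn f univ xs) (hne : x₀ ≠ xs) :
    p * WGD n hp γ (p * K) ≤ WCCD hp (fun _ : Fin p => n) γ (fun _ => 1) K := by
  rw [WGD, WCCD, ← smul_eq_mul, ← Real.sSup_smul_of_nonneg (Nat.cast_nonneg p)]
  refine csSup_le_csSup ?bdd (Set.Nonempty.smul_set ⟨_, f, gdSeq hp γ f x₀, xs, hconv, hdiff,
    hlip, hmin, fun _ => rfl, hne, rfl⟩) ?sub
  case bdd =>
    refine ⟨2 * p * ∏ j ∈ Finset.range (p * K), ccdGapFactor hp (fun _ => 1) γ j, ?_⟩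
    rintro _ ⟨g, x, xs, hsm, hmin, hccd, -, rfl⟩
    exact hccd.div_le_prod hp hsm (fun _ => one_pos) hmin _
  case sub =>
    rintro _ ⟨_, ⟨g, u, us, hgc, hgd, hglip, hgmin, hgu, hgne, rfl⟩, rfl⟩
    have hiter := isCCD_ccdSeq hp γ (fhat p g) (diagPt p (u 0))
    have hsum := hiter.blockSum_eq hp hgd hgu (blockSum_diagPt hp (u 0))
    refine ⟨fhat p g, ccdSeq hp γ (fhat p g) (diagPt p (u 0)), diagPt p us,
      isCoordSmooth_fhat hgc hgd hglip, isMinOn_fhat_diagPt hp hgmin, hiter, fun h => hgne ?_, ?_⟩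
    · have h' : diagPt p (u 0) = diagPt p us := h
      simpa [blockSum_diagPt hp] using congrArg (blockSum p) h'
    · simp only [one_mul]
      rw [show ccdSeq hp γ (fhat p g) (diagPt p (u 0)) 0 = diagPt p (u 0) from rfl,
        sum_sq_norm_diagPt_sub, fhat_diagPt hp, fhat_apply, hsum, div_inv_mul_eq_mul_div,
        smul_eq_mul]

end WorstCase

theorem ccd_lower_bound_construction_general {n p K : ℕ} (hp : 0 < p)
    (f : EuclideanSpace ℝ (Fin n) → ℝ)
    (hconv : ConvexOn ℝ Set.univ f) (hdiff : Differentiable ℝ f)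
    (hlip : ∀ a b : EuclideanSpace ℝ (Fin n), ‖gradient f a - gradient f b‖ ≤ ‖a - b‖)
    (x₀ xstar : EuclideanSpace ℝ (Fin n)) (hmin : IsMinOn f Set.univ xstar)
    (hne : x₀ ≠ xstar) (γ : Fin p → ℝ)
    (xh : ℕ → Sp (fun _ : Fin p => n)) (hxh0 : xh 0 = diagPt p x₀)
    (hiter : IsCCD hp (fun _ : Fin p => n) γ (fhat p f) xh) :
    -- (a) the diagonal point built from `x_*` is a global minimizer of `f̂`
    IsMinOn (fhat p f) Set.univ (diagPt p xstar) ∧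
    -- (b) the block sums are gradient descent iterates on `f`
    ((blockSum p (xh 0)) = x₀ ∧ ∀ i : ℕ,
      (blockSum p (xh (i + 1))) =
        blockSum p (xh i) - γ (blkIdx p hp i) • gradient f (blockSum p (xh i))) ∧
    -- (c) function values agree
    (∀ i : ℕ, fhat p f (xh i) = f (blockSum p (xh i))) ∧
    -- (d) the weighted initial distance
    (∑ ℓ : Fin p, ‖xh 0 ℓ - diagPt p xstar ℓ‖ ^ 2) = (p : ℝ)⁻¹ * ‖x₀ - xstar‖ ^ 2 ∧
    -- (e) the performance ratio is multiplied by `p`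
    (fhat p f (xh (p * K)) - fhat p f (diagPt p xstar)) /
        (∑ ℓ : Fin p, ‖xh 0 ℓ - diagPt p xstar ℓ‖ ^ 2)
      = p * ((f (blockSum p (xh (p * K))) - f xstar) / ‖x₀ - xstar‖ ^ 2) ∧
    -- in particular, the worst case of CCD is at least `p` times the worst case of GD
    p * WGD n hp γ (p * K) ≤ WCCD hp (fun _ : Fin p => n) γ (fun _ => 1) K := by
  have hdist : ∑ ℓ : Fin p, ‖xh 0 ℓ - diagPt p xstar ℓ‖ ^ 2 = (p : ℝ)⁻¹ * ‖x₀ - xstar‖ ^ 2 := by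
    rw [hxh0, sum_sq_norm_diagPt_sub]
  refine ⟨isMinOn_fhat_diagPt hp hmin, ⟨by rw [hxh0, blockSum_diagPt hp],
    hiter.blockSum_succ hp hdiff⟩, fun _ => rfl, hdist, ?_,
    mul_WGD_le_WCCD hp K hconv hdiff hlip hmin hne⟩
  rw [hdist, fhat_diagPt hp, div_inv_mul_eq_mul_div, fhat_apply]

theorem ccd_lower_bound_construction {n p K : ℕ} (hp : 0 < p)
    (f : EuclideanSpace ℝ (Fin n) → ℝ)
    (hconv : ConvexOn ℝ Set.univ f) (hdiff : Differentiable ℝ f)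
    (hlip : ∀ a b : EuclideanSpace ℝ (Fin n), ‖gradient f a - gradient f b‖ ≤ ‖a - b‖)
    (x₀ xstar : EuclideanSpace ℝ (Fin n)) (hmin : IsMinOn f Set.univ xstar)
    (hne : x₀ ≠ xstar) (γ : Fin p → ℝ) (hγ : ∀ ℓ, 0 < γ ℓ)
    (xh : ℕ → Sp (fun _ : Fin p => n)) (hxh0 : xh 0 = diagPt p x₀)
    (hiter : IsCCD hp (fun _ : Fin p => n) γ (fhat p f) xh) :
    -- (a) the diagonal point built from `x_*` is a global minimizer of `f̂`
    IsMinOn (fhat p f) Set.univ (diagPt p xstar) ∧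
    -- (b) the block sums are gradient descent iterates on `f`
    ((blockSum p (xh 0)) = x₀ ∧ ∀ i : ℕ,
      (blockSum p (xh (i + 1))) =
        blockSum p (xh i) - γ (blkIdx p hp i) • gradient f (blockSum p (xh i))) ∧
    -- (c) function values agree
    (∀ i : ℕ, fhat p f (xh i) = f (blockSum p (xh i))) ∧
    -- (d) the weighted initial distance
    (∑ ℓ : Fin p, ‖xh 0 ℓ - diagPt p xstar ℓ‖ ^ 2) = (p : ℝ)⁻¹ * ‖x₀ - xstar‖ ^ 2 ∧
    -- (e) the performance ratio is multiplied by `p`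
    (fhat p f (xh (p * K)) - fhat p f (diagPt p xstar)) /
        (∑ ℓ : Fin p, ‖xh 0 ℓ - diagPt p xstar ℓ‖ ^ 2)
      = p * ((f (blockSum p (xh (p * K))) - f xstar) / ‖x₀ - xstar‖ ^ 2) ∧
    -- in particular, the worst case of CCD is at least `p` times the worst case of GD
    p * WGD n hp γ (p * K) ≤ WCCD hp (fun _ : Fin p => n) γ (fun _ => 1) K :=
  ccd_lower_bound_construction_general hp f hconv hdiff hlip x₀ xstar hmin hne γ xh hxh0 hiter
end
end

section
/- Let f ∈ F^coord_{0,(L₁,L₂)}(ℝ^d) with two blocks and let K ≥ 2. Let (x_i)_{i=0,…,2K} be the iterates of K cycles of 2-block alternating minimization: at each step i with active block ℓ alternating between 1 and 2, x_i minimizes f over the affine subspace {x_{i−1} + U_ℓ h : h ∈ ℝ^{d_ℓ}}. Suppose x_* is a global minimizer of f and R_a > 0 satisfies ‖x_{2k} − x_*‖ ≤ R_a for every k ∈ {1,…,K}. Then f(x_{2K}) − f(x_*) ≤ 2 min{L₁, L₂} R_a² / (K − 1). -/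
open RealInnerProductSpace

noncomputable section

/-- Block index used at step `i` (steps counted from `0`) of `2`-block alternating
minimization: the two blocks alternate. -/
def blkIdx2 (i : ℕ) : Fin 2 := ⟨i % 2, Nat.mod_lt i (by norm_num)⟩

/-!
After a block step the partial gradient of the block just minimized vanishes, so with two
blocks `∇ f (x_j)` lives on the block `ℓ` about to be updated. Writing `δ_j = f (x_j) - f (x⋆)`,
convexity and Cauchy–Schwarz give `δ_j ≤ ‖∇^{(ℓ)} f (x_j)‖ R_a` (for odd `j`, block `ℓ` of
`x_j - x⋆` is still that of `x_{j-1}`), and the descent lemma along block `ℓ` gives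
`δ_j - δ_{j+1} ≥ ‖∇^{(ℓ)} f (x_j)‖² / (2 L_ℓ)`. Hence `1 / δ_{j+1} ≥ 1 / δ_j + 1 / (2 L_ℓ R_a²)`,
and summing over the `K - 1` cycles after the first one yields the rate.
-/

open scoped Gradient

section Gradient

variable {F : Type*} [NormedAddCommGroup F] [InnerProductSpace ℝ F] [CompleteSpace F]
  {g : F → ℝ}

theorem hasDerivAt_apply_add_smul {x v : F} {t : ℝ} (hg : DifferentiableAt ℝ g (x + t • v)) :
    HasDerivAt (fun s : ℝ => g (x + s • v)) ⟪∇ g (x + t • v), v⟫ t := by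
  have hline : HasDerivAt (fun s : ℝ => x + s • v) v t := by
    simpa using ((hasDerivAt_id t).smul_const v).const_add x
  simpa [Function.comp_def] using
    (hasGradientAt_iff_hasFDerivAt.mp hg.hasGradientAt).comp_hasDerivAt t hline

theorem ConvexOn.add_inner_gradient_le_s15 (hconv : ConvexOn ℝ Set.univ g) {x : F}
    (hg : DifferentiableAt ℝ g x) (y : F) : g x + ⟪∇ g x, y - x⟫ ≤ g y := by
  have hline : ConvexOn ℝ Set.univ (fun t : ℝ => g (x + t • (y - x))) := by
    simpa [Function.comp_def, AffineMap.lineMap_apply_module', add_comm] using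
      hconv.comp_affineMap (AffineMap.lineMap x y)
  have hslope := hline.le_slope_of_hasDerivAt (Set.mem_univ 0) (Set.mem_univ 1) one_pos
    (hasDerivAt_apply_add_smul (by simpa using hg))
  simp only [slope_def_field, one_smul, zero_smul, add_zero, add_sub_cancel, sub_zero,
    div_one] at hslope
  linarith

theorem le_add_inner_gradient_add_sq {x : F} {L : ℝ} (hg : Differentiable ℝ g)
    (hlip : ∀ y, ‖∇ g y - ∇ g x‖ ≤ L * ‖y - x‖) (h : F) :
    g (x + h) ≤ g x + ⟪∇ g x, h⟫ + L / 2 * ‖h‖ ^ 2 := by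
  set ψ : ℝ → ℝ := fun t => g (x + t • h) - t * ⟪∇ g x, h⟫ - L * ‖h‖ ^ 2 * t ^ 2 / 2
  have hψ : ∀ t, HasDerivAt ψ (⟪∇ g (x + t • h) - ∇ g x, h⟫ - L * ‖h‖ ^ 2 * t) t := by
    intro t
    have hsq := ((hasDerivAt_pow 2 t).const_mul (L * ‖h‖ ^ 2)).div_const 2
    refine (((hasDerivAt_apply_add_smul (hg _)).sub
      ((hasDerivAt_id t).mul_const ⟪∇ g x, h⟫)).sub hsq).congr_deriv ?_
    rw [inner_sub_left]
    ring
  have hanti : AntitoneOn ψ (Set.Ici 0) := by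
    refine antitoneOn_of_hasDerivWithinAt_nonpos (convex_Ici 0)
      (fun t _ => (hψ t).continuousAt.continuousWithinAt) (fun t _ => (hψ t).hasDerivWithinAt)
      fun t ht => ?_
    rw [interior_Ici, Set.mem_Ioi] at ht
    have hcs := real_inner_le_norm (∇ g (x + t • h) - ∇ g x) h
    have hL := hlip (x + t • h)
    rw [add_sub_cancel_left, norm_smul, Real.norm_of_nonneg ht.le] at hL
    nlinarith [norm_nonneg h]
  have h01 := hanti Set.self_mem_Ici (Set.mem_Ici.mpr zero_le_one) zero_le_one
  simp only [ψ, one_smul, zero_smul, add_zero, one_mul, one_pow, mul_one, zero_mul,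
    zero_pow two_ne_zero, mul_zero, zero_div, sub_zero] at h01
  linarith

end Gradient

theorem one_div_add_one_div_le_one_div_of_sq_le {a b C : ℝ} (hb : 0 < b) (hba : b ≤ a)
    (h : a ^ 2 ≤ C * (a - b)) : 1 / a + 1 / C ≤ 1 / b := by
  have ha : 0 < a := hb.trans_le hba
  have hC : 0 < C := pos_of_mul_pos_left ((pow_pos ha 2).trans_le h) (sub_nonneg.mpr hba)
  rw [div_add_div _ _ ha.ne' hC.ne', div_le_div_iff₀ (by positivity) hb]
  nlinarith

theorem add_mul_le_of_add_le_succ {u : ℕ → ℝ} {c : ℝ} {m n : ℕ} (hmn : m ≤ n)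
    (h : ∀ k, m ≤ k → k < n → u k + c ≤ u (k + 1)) : u m + ((n : ℝ) - m) * c ≤ u n := by
  induction n, hmn using Nat.le_induction with
  | base => simp
  | succ n hmn ih =>
    have hlast := h n hmn (by omega)
    have hprev := ih fun k hmk hkn => h k hmk (by omega)
    push_cast
    linarith

section Blocks

variable {p : ℕ} {d : Fin p → ℕ}

def injCLM (d : Fin p → ℕ) (ℓ : Fin p) : Blk d ℓ →L[ℝ] Sp d :=
  (PiLp.continuousLinearEquiv 2 ℝ (Blk d)).symm.toContinuousLinearMap.comp
    (ContinuousLinearMap.single ℝ (Blk d) ℓ)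

theorem coe_injCLM (ℓ : Fin p) : ⇑(injCLM d ℓ) = inj d ℓ := rfl

theorem inj_zero (ℓ : Fin p) : inj d ℓ 0 = 0 := map_zero (injCLM d ℓ)

theorem inj_apply_of_ne {ℓ m : Fin p} (hm : m ≠ ℓ) (h : Blk d ℓ) : inj d ℓ h m = 0 :=
  PiLp.single_eq_of_ne 2 hm h

theorem inner_inj_right (y : Sp d) (ℓ : Fin p) (h : Blk d ℓ) : ⟪y, inj d ℓ h⟫ = ⟪y ℓ, h⟫ := by
  rw [PiLp.inner_apply, Finset.sum_eq_single ℓ (fun m _ hm => by simp [inj_apply_of_ne hm])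
    (by simp)]
  exact congrArg _ (PiLp.single_eq_same 2 ℓ h)

theorem inner_eq_inner_apply_of_apply_eq_zero {y : Sp d} {ℓ : Fin p} (hy : ∀ m ≠ ℓ, y m = 0)
    (z : Sp d) : ⟪y, z⟫ = ⟪y ℓ, z ℓ⟫ := by
  rw [PiLp.inner_apply, Finset.sum_eq_single ℓ (fun m _ hm => by simp [hy m hm]) (by simp)]

theorem hasGradientAt_apply_add_inj {f : Sp d → ℝ} {x : Sp d} {ℓ : Fin p} {h : Blk d ℓ}
    (hf : DifferentiableAt ℝ f (x + inj d ℓ h)) :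
    HasGradientAt (fun h' => f (x + inj d ℓ h')) (∇ f (x + inj d ℓ h) ℓ) h := by
  rw [hasGradientAt_iff_hasFDerivAt]
  refine (hf.hasFDerivAt.comp h ((injCLM d ℓ).hasFDerivAt.const_add x)).congr_fderiv ?_
  ext v
  rw [ContinuousLinearMap.comp_apply, coe_injCLM, ← inner_gradient_left, inner_inj_right,
    InnerProductSpace.toDual_apply_apply]

end Blocks

section BlockStep

variable {p : ℕ} {d : Fin p → ℕ} {f : Sp d → ℝ} {ℓ : Fin p} {x x' : Sp d}

def blockSlice (d : Fin p → ℕ) (ℓ : Fin p) (x : Sp d) : Set (Sp d) :=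
  {z | ∃ h : Blk d ℓ, z = x + inj d ℓ h}

def IsBlockMinStep (f : Sp d → ℝ) (ℓ : Fin p) (x x' : Sp d) : Prop :=
  x' ∈ blockSlice d ℓ x ∧ IsMinOn f (blockSlice d ℓ x) x'

theorem self_mem_blockSlice (ℓ : Fin p) (x : Sp d) : x ∈ blockSlice d ℓ x :=
  ⟨0, by rw [inj_zero, add_zero]⟩

namespace IsBlockMinStep

theorem le (hstep : IsBlockMinStep f ℓ x x') : f x' ≤ f x :=
  hstep.2 (self_mem_blockSlice ℓ x)

theorem apply_eq_of_ne (hstep : IsBlockMinStep f ℓ x x') {m : Fin p} (hm : m ≠ ℓ) :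
    x' m = x m := by
  obtain ⟨h, rfl⟩ := hstep.1
  simp [inj_apply_of_ne hm]

theorem gradient_apply_eq_zero (hstep : IsBlockMinStep f ℓ x x')
    (hf : DifferentiableAt ℝ f x') : ∇ f x' ℓ = 0 := by
  obtain ⟨⟨h₀, rfl⟩, hmin⟩ := hstep
  have hlocal : IsLocalMin (fun h => f (x + inj d ℓ h)) h₀ :=
    Filter.Eventually.of_forall fun h => hmin ⟨h, rfl⟩
  simpa using hlocal.hasFDerivAt_eq_zero
    (hasGradientAt_iff_hasFDerivAt.mp (hasGradientAt_apply_add_inj hf))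

theorem le_sub_norm_sq_div (hstep : IsBlockMinStep f ℓ x x') {L : Fin p → ℝ}
    (hf : IsCoordSmooth d L f) (hL : 0 < L ℓ) :
    f x' ≤ f x - ‖∇ f x ℓ‖ ^ 2 / (2 * L ℓ) := by
  obtain ⟨-, hdiff, hlip⟩ := hf
  have hgrad (h : Blk d ℓ) : ∇ (fun h' => f (x + inj d ℓ h')) h = ∇ f (x + inj d ℓ h) ℓ :=
    (hasGradientAt_apply_add_inj (hdiff _)).gradient
  have hdescent := le_add_inner_gradient_add_sq (g := fun h => f (x + inj d ℓ h)) (x := 0)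
    (fun h => (hasGradientAt_apply_add_inj (hdiff _)).differentiableAt)
    (fun h => by rw [hgrad, hgrad, inj_zero, add_zero, sub_zero]; exact hlip ℓ x h)
    (-(L ℓ)⁻¹ • ∇ f x ℓ)
  simp only [hgrad, inj_zero, add_zero, zero_add, inner_smul_right, real_inner_self_eq_norm_sq,
    norm_smul, norm_neg, norm_inv, Real.norm_of_nonneg hL.le] at hdescent
  have hL' := hL.ne'
  calc f x' ≤ _ := hstep.2 ⟨-(L ℓ)⁻¹ • ∇ f x ℓ, rfl⟩
    _ ≤ _ := hdescent
    _ = f x - ‖∇ f x ℓ‖ ^ 2 / (2 * L ℓ) := by field_simp; ring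

theorem one_div_add_one_div_le (hstep : IsBlockMinStep f ℓ x x') {L : Fin p → ℝ}
    (hf : IsCoordSmooth d L f) (hL : 0 < L ℓ) (hgrad : ∀ m ≠ ℓ, ∇ f x m = 0)
    {xstar : Sp d} {R : ℝ} (hR : ‖(x - xstar) ℓ‖ ≤ R) (hpos : 0 < f x' - f xstar) :
    1 / (f x - f xstar) + 1 / (2 * L ℓ * R ^ 2) ≤ 1 / (f x' - f xstar) := by
  have hgap : f x - f xstar ≤ ‖∇ f x ℓ‖ * R :=
    calc f x - f xstar ≤ ⟪∇ f x, x - xstar⟫ := by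
          have := hf.1.add_inner_gradient_le_s15 (hf.2.1 x) xstar
          rw [← neg_sub, inner_neg_right] at this
          linarith
      _ = ⟪∇ f x ℓ, (x - xstar) ℓ⟫ := inner_eq_inner_apply_of_apply_eq_zero hgrad _
      _ ≤ ‖∇ f x ℓ‖ * ‖(x - xstar) ℓ‖ := real_inner_le_norm _ _
      _ ≤ ‖∇ f x ℓ‖ * R := mul_le_mul_of_nonneg_left hR (norm_nonneg _)
  have hdecrease := hstep.le_sub_norm_sq_div hf hL
  have hmono := hstep.le
  refine one_div_add_one_div_le_one_div_of_sq_le hpos (by linarith) ?_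
  have hL' := hL.ne'
  calc (f x - f xstar) ^ 2 ≤ (‖∇ f x ℓ‖ * R) ^ 2 := pow_le_pow_left₀ (by linarith) hgap 2
    _ = 2 * L ℓ * R ^ 2 * (‖∇ f x ℓ‖ ^ 2 / (2 * L ℓ)) := by field_simp
    _ ≤ 2 * L ℓ * R ^ 2 * (f x - f xstar - (f x' - f xstar)) :=
        mul_le_mul_of_nonneg_left (by linarith) (by positivity)

end IsBlockMinStep

theorem antitoneOn_of_isBlockMinStep {ℓ : ℕ → Fin p} {x : ℕ → Sp d} {n : ℕ}
    (hstep : ∀ i < n, IsBlockMinStep f (ℓ i) (x i) (x (i + 1))) :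
    AntitoneOn (fun i => f (x i)) (Set.Iic n) := by
  intro i _ j hj hij
  induction j, hij using Nat.le_induction with
  | base => exact le_rfl
  | succ j hij ih =>
    exact (hstep j hj).le.trans (ih (Nat.le_of_succ_le hj))

end BlockStep

theorem blkIdx2_two_mul (k : ℕ) : blkIdx2 (2 * k) = 0 := Fin.ext (by simp [blkIdx2])

theorem blkIdx2_two_mul_add_one (k : ℕ) : blkIdx2 (2 * k + 1) = 1 := Fin.ext (by simp [blkIdx2])

theorem one_div_add_one_div_le_of_isBlockMinStep_blkIdx2 {d : Fin 2 → ℕ} {f : Sp d → ℝ}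
    {x : ℕ → Sp d} {n : ℕ} {L : Fin 2 → ℝ} (hf : IsCoordSmooth d L f) (hL : ∀ ℓ, 0 < L ℓ)
    (hstep : ∀ i < n, IsBlockMinStep f (blkIdx2 i) (x i) (x (i + 1))) {k : ℕ} (hk : 1 ≤ k)
    (hkn : 2 * k + 2 ≤ n) {xstar : Sp d} {R : ℝ} (hR : ‖x (2 * k) - xstar‖ ≤ R)
    (hpos : 0 < f (x (2 * k + 2)) - f xstar) :
    1 / (f (x (2 * k)) - f xstar) + 1 / (2 * min (L 0) (L 1) * R ^ 2)
      ≤ 1 / (f (x (2 * k + 2)) - f xstar) := by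
  have hprev : IsBlockMinStep f 1 (x (2 * (k - 1) + 1)) (x (2 * k)) := by
    have := hstep (2 * (k - 1) + 1) (by omega)
    rwa [blkIdx2_two_mul_add_one, show 2 * (k - 1) + 1 + 1 = 2 * k by omega] at this
  have h₀ : IsBlockMinStep f 0 (x (2 * k)) (x (2 * k + 1)) :=
    blkIdx2_two_mul k ▸ hstep (2 * k) (by omega)
  have h₁ : IsBlockMinStep f 1 (x (2 * k + 1)) (x (2 * k + 2)) :=
    blkIdx2_two_mul_add_one k ▸ hstep (2 * k + 1) (by omega)
  have hstep₀ := h₀.one_div_add_one_div_le hf (hL 0)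
    (fun m hm => Fin.eq_one_of_ne_zero m hm ▸ hprev.gradient_apply_eq_zero (hf.2.1 _))
    ((PiLp.norm_apply_le _ 0).trans hR) (hpos.trans_le (by linarith [h₁.le]))
  have hblock₁ : (x (2 * k + 1) - xstar) 1 = (x (2 * k) - xstar) 1 := by
    simp only [PiLp.sub_apply, h₀.apply_eq_of_ne one_ne_zero]
  have hstep₁ := h₁.one_div_add_one_div_le hf (hL 1)
    (fun m hm => (by omega : m = 0) ▸ h₀.gradient_apply_eq_zero (hf.2.1 _))
    (hblock₁ ▸ (PiLp.norm_apply_le _ 1).trans hR) hpos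
  have hmin : 1 / (2 * min (L 0) (L 1) * R ^ 2)
      ≤ 1 / (2 * L 0 * R ^ 2) + 1 / (2 * L 1 * R ^ 2) := by
    have := hL 0
    have := hL 1
    rcases min_choice (L 0) (L 1) with h | h <;> rw [h] <;>
      simp only [le_add_iff_nonneg_right, le_add_iff_nonneg_left] <;> positivity
  linarith

theorem alternating_minimization_rate_general {d : Fin 2 → ℕ} (L : Fin 2 → ℝ)
    (hL : ∀ ℓ, 0 < L ℓ) (f : Sp d → ℝ) (hf : IsCoordSmooth d L f)
    (K : ℕ) (hK : 2 ≤ K) (x : ℕ → Sp d)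
    (hstep : ∀ i < 2 * K,
      (∃ h : Blk d (blkIdx2 i), x (i + 1) = x i + inj d (blkIdx2 i) h) ∧
      IsMinOn f {z : Sp d | ∃ h : Blk d (blkIdx2 i), z = x i + inj d (blkIdx2 i) h} (x (i + 1)))
    (xstar : Sp d)
    (Ra : ℝ)
    (hbound : ∀ k : ℕ, 1 ≤ k → k ≤ K → ‖x (2 * k) - xstar‖ ≤ Ra) :
    f (x (2 * K)) - f xstar ≤ 2 * min (L 0) (L 1) * Ra ^ 2 / ((K : ℝ) - 1) := by
  have hK₁ : (0 : ℝ) < K - 1 := sub_pos.mpr (Nat.one_lt_cast.mpr hK)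
  have hLmin := lt_min (hL 0) (hL 1)
  rcases le_or_gt (f (x (2 * K)) - f xstar) 0 with hle | hpos
  · exact hle.trans (by positivity)
  have hgap (j : ℕ) (hj : j ≤ 2 * K) : 0 < f (x j) - f xstar := hpos.trans_le (by
    linarith [antitoneOn_of_isBlockMinStep hstep (Set.mem_Iic.mpr hj)
      (Set.mem_Iic.mpr (le_refl (2 * K))) hj])
  have hRa : 0 < Ra := (norm_pos_iff.mpr (sub_ne_zero.mpr fun h => by simp [h] at hpos)).trans_le
    (hbound K (by omega) le_rfl)
  have hcycle (k : ℕ) (hk : 1 ≤ k) (hkK : k < K) : 1 / (f (x (2 * k)) - f xstar)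
      + 1 / (2 * min (L 0) (L 1) * Ra ^ 2) ≤ 1 / (f (x (2 * (k + 1))) - f xstar) :=
    one_div_add_one_div_le_of_isBlockMinStep_blkIdx2 hf hL hstep hk (by omega)
      (hbound k hk hkK.le) (hgap _ (by omega))
  have htelescope := add_mul_le_of_add_le_succ (by omega : 1 ≤ K) hcycle
  have hgap₂ := one_div_pos.mpr (hgap 2 (by omega))
  have hrate : ((K : ℝ) - 1) / (2 * min (L 0) (L 1) * Ra ^ 2)
      ≤ 1 / (f (x (2 * K)) - f xstar) := by
    push_cast at htelescope
    rw [div_eq_mul_one_div]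
    linarith
  rw [div_le_div_iff₀ (by positivity) hpos] at hrate
  rw [le_div_iff₀ hK₁]
  linarith

theorem alternating_minimization_rate {d : Fin 2 → ℕ} (L : Fin 2 → ℝ)
    (hL : ∀ ℓ, 0 < L ℓ) (f : Sp d → ℝ) (hf : IsCoordSmooth d L f)
    (K : ℕ) (hK : 2 ≤ K) (x : ℕ → Sp d)
    (hstep : ∀ i < 2 * K,
      (∃ h : Blk d (blkIdx2 i), x (i + 1) = x i + inj d (blkIdx2 i) h) ∧
      IsMinOn f {z : Sp d | ∃ h : Blk d (blkIdx2 i), z = x i + inj d (blkIdx2 i) h} (x (i + 1)))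
    (xstar : Sp d) (hmin : IsMinOn f Set.univ xstar)
    (Ra : ℝ) (hRa : 0 < Ra)
    (hbound : ∀ k : ℕ, 1 ≤ k → k ≤ K → ‖x (2 * k) - xstar‖ ≤ Ra) :
    f (x (2 * K)) - f xstar ≤ 2 * min (L 0) (L 1) * Ra ^ 2 / ((K : ℝ) - 1) :=
  alternating_minimization_rate_general L hL f hf K hK x hstep xstar Ra hbound
end
end
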